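/- arXiv:2505.20123 — 3 statements merged into one kernel-verified Lean document; each statement's English description precedes it below -/
import Mathlib

section
/- For two positive semi-definite matrices Σ₁, Σ₂ ∈ ℝ^{n×n}, the trace of Σ₁^{1/2} Σ₂^{1/2} is nonnegative and bounded above by the trace of (Σ₁^{1/2} Σ₂ Σ₁^{1/2})^{1/2}. -/
/-!
Write `A = Σ₁^{1/2}` and `B = Σ₂^{1/2}`. Nonnegativity is `tr(A B) = tr(A^{1/2} B A^{1/2}) ≥ 0`.
For the upper bound, `M = A B` satisfies `M Mᴴ = A Σ₂ A =: P`, and the claim is that the trace of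
`M` is at most its nuclear norm `tr P^{1/2}`. Conjugating `M` by the eigenvector unitary of `P`
keeps the trace and yields `N` with `N Nᴴ = diag λ`, so row `i` of `N` has norm `√λᵢ`, whence
`Re Nᵢᵢ ≤ √λᵢ`; summing over `i` gives `Re tr M ≤ Σ √λᵢ = tr P^{1/2}`.
-/

open Matrix

open scoped ComplexOrder in
/-- The positive semidefinite square root of a positive semidefinite matrix
(the definition of `Matrix.PosSemidef.sqrt` in Mathlib of December 2024, since removed). -/
noncomputable def Matrix.PosSemidef.sqrt {n 𝕜 : Type*} [Fintype n] [DecidableEq n] [RCLike 𝕜]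
    {A : Matrix n n 𝕜} (hA : A.PosSemidef) : Matrix n n 𝕜 :=
  hA.1.eigenvectorUnitary.1 * diagonal ((↑) ∘ (Real.sqrt ·) ∘ hA.1.eigenvalues) *
  (star hA.1.eigenvectorUnitary : Matrix n n 𝕜)

open scoped ComplexOrder MatrixOrder

namespace Matrix

variable {n 𝕜 : Type*} [Fintype n] [RCLike 𝕜]

namespace PosSemidef

variable [DecidableEq n] {A : Matrix n n 𝕜}

lemma sqrt_eq_cfc (hA : A.PosSemidef) : hA.sqrt = cfc Real.sqrt A := by
  rw [hA.1.cfc_eq, IsHermitian.cfc, Unitary.conjStarAlgAut_apply]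
  rfl

lemma posSemidef_sqrt (hA : A.PosSemidef) : hA.sqrt.PosSemidef := by
  rw [sqrt_eq_cfc, ← nonneg_iff_posSemidef]
  exact cfc_nonneg fun x _ ↦ Real.sqrt_nonneg x

lemma sqrt_mul_self (hA : A.PosSemidef) : hA.sqrt * hA.sqrt = A := by
  rw [sqrt_eq_cfc, ← cfc_mul ..]
  conv_rhs => rw [← cfc_id' ℝ A hA.1]
  exact cfc_congr fun x hx ↦ Real.mul_self_sqrt <| spectrum_nonneg_of_nonneg hA.nonneg hx

lemma trace_sqrt (hA : A.PosSemidef) : hA.sqrt.trace = ∑ i, (√(hA.1.eigenvalues i) : 𝕜) := by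
  rw [PosSemidef.sqrt, trace_mul_cycle, Unitary.coe_star_mul_self, one_mul, trace_diagonal]
  rfl

end PosSemidef

lemma PosSemidef.trace_mul_nonneg {A B : Matrix n n 𝕜} (hA : A.PosSemidef) (hB : B.PosSemidef) :
    0 ≤ (A * B).trace := by
  classical
  calc 0 ≤ (hA.sqrt * B * hA.sqrtᴴ).trace := (hB.mul_mul_conjTranspose_same _).trace_nonneg
    _ = (A * B).trace := by
      rw [hA.posSemidef_sqrt.1.eq, trace_mul_cycle, hA.sqrt_mul_self]

lemma trace_conjStarAlgAut [DecidableEq n] (U : unitary (Matrix n n 𝕜)) (M : Matrix n n 𝕜) :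
    (Unitary.conjStarAlgAut 𝕜 _ U M).trace = M.trace := by
  rw [Unitary.conjStarAlgAut_apply, trace_mul_cycle, Unitary.coe_star_mul_self, one_mul]

lemma norm_apply_self_sq_le_re_mul_conjTranspose_apply (N : Matrix n n 𝕜) (i : n) :
    ‖N i i‖ ^ 2 ≤ RCLike.re ((N * Nᴴ) i i) := by
  have hrow : RCLike.re ((N * Nᴴ) i i) = ∑ j, ‖N i j‖ ^ 2 := by
    simp only [mul_apply, conjTranspose_apply, RCLike.star_def, RCLike.mul_conj, map_sum,
      ← RCLike.ofReal_pow, RCLike.ofReal_re]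
  rw [hrow]
  exact Finset.single_le_sum (f := fun j ↦ ‖N i j‖ ^ 2) (fun j _ ↦ by positivity)
    (Finset.mem_univ i)

theorem re_trace_le_re_trace_sqrt [DecidableEq n] {M P : Matrix n n 𝕜}
    (hMP : M * Mᴴ = P) (hP : P.PosSemidef) :
    RCLike.re M.trace ≤ RCLike.re hP.sqrt.trace := by
  set N := Unitary.conjStarAlgAut 𝕜 _ (star hP.1.eigenvectorUnitary) M
  have hN : N * Nᴴ = diagonal (RCLike.ofReal ∘ hP.1.eigenvalues) := by
    rw [← star_eq_conjTranspose, ← map_star, ← map_mul, star_eq_conjTranspose, hMP,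
      hP.1.conjStarAlgAut_star_eigenvectorUnitary]
  have hdiag (i : n) : RCLike.re (N i i) ≤ √(hP.1.eigenvalues i) := by
    refine (RCLike.re_le_norm _).trans <|
      (Real.le_sqrt (norm_nonneg _) (hP.eigenvalues_nonneg i)).mpr ?_
    simpa [hN] using N.norm_apply_self_sq_le_re_mul_conjTranspose_apply i
  rw [← trace_conjStarAlgAut (star hP.1.eigenvectorUnitary) M, hP.trace_sqrt, trace,
    map_sum, map_sum]
  simp only [RCLike.ofReal_re]
  exact Finset.sum_le_sum fun i _ ↦ hdiag i

end Matrix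

/-- For two positive semi-definite real matrices `S₁, S₂`, the trace of
`S₁^{1/2} * S₂^{1/2}` is nonnegative and bounded above by the trace of
`(S₁^{1/2} * S₂ * S₁^{1/2})^{1/2}`. -/
theorem trace_sqrt_mul_sqrt_nonneg_and_le {n : ℕ}
    {S₁ S₂ : Matrix (Fin n) (Fin n) ℝ}
    (h₁ : S₁.PosSemidef) (h₂ : S₂.PosSemidef)
    (hP : (h₁.sqrt * S₂ * h₁.sqrt).PosSemidef) :
    0 ≤ (h₁.sqrt * h₂.sqrt).trace ∧
      (h₁.sqrt * h₂.sqrt).trace ≤ hP.sqrt.trace := by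
  have hMP : h₁.sqrt * h₂.sqrt * (h₁.sqrt * h₂.sqrt)ᴴ = h₁.sqrt * S₂ * h₁.sqrt := by
    rw [conjTranspose_mul, h₁.posSemidef_sqrt.1.eq, h₂.posSemidef_sqrt.1.eq, ← Matrix.mul_assoc,
      Matrix.mul_assoc h₁.sqrt, h₂.sqrt_mul_self]
  exact ⟨h₁.posSemidef_sqrt.trace_mul_nonneg h₂.posSemidef_sqrt,
    re_trace_le_re_trace_sqrt hMP hP⟩
end

section
/- Consider the ODE dx/dt = −t (Σ + t² I)^{-1}(μ − x) on ℝⁿ with Σ PSD having eigendecomposition Σ = U diag(λ₁,…,λₙ) Uᵀ, and terminal condition x(T) = x_T. Then the solution at time t ∈ [0, T] is x(t) = μ + U diag(√((λ₁+t²)/(λ₁+T²)), …, √((λₙ+t²)/(λₙ+T²))) Uᵀ (x_T − μ). -/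
open Matrix Set

/-! In the eigenbasis of `S` everything is diagonal: `S + t²I = U diag(λ + t²) Uᵀ`, and the gain
`√((λₖ + t²)/(λₖ + T²))` has logarithmic derivative `t / (λₖ + t²)`. Hence the matrix
`M(t) = U diag(√((λ + t²)/(λ + T²))) Uᵀ` satisfies `M'(t) = t (S + t²I)⁻¹ M(t)`, which is the ODE for
`x(t) - μ = M(t) (x_T - μ)`, and `M(T) = I`. -/

namespace Matrix

section ConjDiagonal

variable {m R : Type*} [Fintype m] [DecidableEq m] {U : Matrix m m R}

theorem conj_diagonal_mul_conj_diagonal [CommSemiring R] (hU : Uᵀ * U = 1) (a b : m → R) :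
    U * diagonal a * Uᵀ * (U * diagonal b * Uᵀ) = U * diagonal (a * b) * Uᵀ := by
  simp only [Matrix.mul_assoc]
  rw [← Matrix.mul_assoc Uᵀ, hU, Matrix.one_mul, ← Matrix.mul_assoc (diagonal a),
    diagonal_mul_diagonal]
  rfl

theorem conj_diagonal_add_smul_one [CommSemiring R] (hU : U * Uᵀ = 1) (a : m → R) (c : R) :
    U * diagonal a * Uᵀ + c • 1 = U * diagonal (fun k => a k + c) * Uᵀ := by
  have hdiag : diagonal (fun k => a k + c) = diagonal a + c • (1 : Matrix m m R) := by
    ext i j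
    rcases eq_or_ne i j with rfl | h <;> simp [*]
  rw [hdiag, Matrix.mul_add, Matrix.add_mul, Matrix.mul_smul, Matrix.smul_mul, Matrix.mul_one, hU]

theorem smul_conj_diagonal [CommSemiring R] (c : R) (a : m → R) :
    c • (U * diagonal a * Uᵀ) = U * diagonal (c • a) * Uᵀ := by
  rw [diagonal_smul, Matrix.mul_smul, Matrix.smul_mul]

theorem isUnit_conj_diagonal_iff [CommRing R] (hU : U * Uᵀ = 1) {a : m → R} :
    IsUnit (U * diagonal a * Uᵀ) ↔ IsUnit a := by
  have hdet : (U * diagonal a * Uᵀ).det = (diagonal a).det := by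
    rw [det_mul, det_mul, mul_right_comm, ← det_mul, hU, det_one, one_mul]
  rw [isUnit_iff_isUnit_det, hdet, ← isUnit_iff_isUnit_det, isUnit_diagonal]

theorem inv_conj_diagonal [Field R] (hU : U * Uᵀ = 1) {a : m → R} (ha : ∀ k, a k ≠ 0) :
    (U * diagonal a * Uᵀ)⁻¹ = U * diagonal a⁻¹ * Uᵀ := by
  refine inv_eq_right_inv ?_
  have hinv : a * a⁻¹ = 1 := funext fun k => mul_inv_cancel₀ (ha k)
  rw [conj_diagonal_mul_conj_diagonal (mul_eq_one_comm.mp hU), hinv, diagonal_one',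
    Matrix.mul_one, hU]

end ConjDiagonal

theorem hasDerivAt_mul_diagonal_mul_mulVec {m 𝕜 : Type*} [Fintype m] [DecidableEq m]
    [NontriviallyNormedField 𝕜] [CompleteSpace 𝕜] (A B : Matrix m m 𝕜) (v : m → 𝕜)
    {d : 𝕜 → m → 𝕜} {d' : m → 𝕜} {t : 𝕜} (hd : HasDerivAt d d' t) :
    HasDerivAt (fun s => (A * diagonal (d s) * B) *ᵥ v) ((A * diagonal d' * B) *ᵥ v) t := by
  let L : (m → 𝕜) →ₗ[𝕜] m → 𝕜 :=
    { toFun e := (A * diagonal e * B) *ᵥ v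
      map_add' e f := by
        rw [show diagonal (e + f) = diagonal e + diagonal f from (diagonal_add e f).symm,
          Matrix.mul_add, Matrix.add_mul, add_mulVec]
      map_smul' c e := by
        simp only [diagonal_smul, Matrix.mul_smul, Matrix.smul_mul, smul_mulVec, RingHom.id_apply] }
  exact L.toContinuousLinearMap.hasFDerivAt.comp_hasDerivAt t hd

end Matrix

theorem hasDerivAt_sqrt_add_sq_div {a b t : ℝ} (ht : 0 < a + t ^ 2) (hb : 0 < b) :
    HasDerivAt (fun s => √((a + s ^ 2) / b)) (t / (a + t ^ 2) * √((a + t ^ 2) / b)) t := by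
  have hpos : 0 < (a + t ^ 2) / b := div_pos ht hb
  convert (((hasDerivAt_pow 2 t).const_add a).div_const b).sqrt hpos.ne' using 1
  have hsq : √((a + t ^ 2) / b) ^ 2 = (a + t ^ 2) / b := Real.sq_sqrt hpos.le
  field_simp
  rw [hsq]
  field_simp
  ring

theorem gaussian_pfode_solution_general {n : ℕ} (T : ℝ) (hT : 0 ≤ T)
    (μ xT : Fin n → ℝ) (S U : Matrix (Fin n) (Fin n) ℝ) (l : Fin n → ℝ)
    (hU : U * Uᵀ = 1) (hl : ∀ k, 0 ≤ l k)
    (hdecomp : S = U * Matrix.diagonal l * Uᵀ)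
    (hinv : ∀ t ∈ Icc (0 : ℝ) T, IsUnit (S + t ^ 2 • (1 : Matrix (Fin n) (Fin n) ℝ))) :
    (fun t : ℝ => μ + (U * Matrix.diagonal
        (fun k => Real.sqrt ((l k + t ^ 2) / (l k + T ^ 2))) * Uᵀ).mulVec (xT - μ)) T = xT ∧
    ∀ t ∈ Icc (0 : ℝ) T,
      HasDerivAt
        (fun t : ℝ => μ + (U * Matrix.diagonal
          (fun k => Real.sqrt ((l k + t ^ 2) / (l k + T ^ 2))) * Uᵀ).mulVec (xT - μ))
        (-(t • ((S + t ^ 2 • (1 : Matrix (Fin n) (Fin n) ℝ))⁻¹.mulVec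
          (μ - (μ + (U * Matrix.diagonal
            (fun k => Real.sqrt ((l k + t ^ 2) / (l k + T ^ 2))) * Uᵀ).mulVec (xT - μ))))))
        t := by
  have hshift (t : ℝ) :
      S + t ^ 2 • (1 : Matrix (Fin n) (Fin n) ℝ) = U * diagonal (fun k => l k + t ^ 2) * Uᵀ :=
    hdecomp ▸ conj_diagonal_add_smul_one hU l (t ^ 2)
  have hpos : ∀ t ∈ Icc (0 : ℝ) T, ∀ k, 0 < l k + t ^ 2 := by
    intro t ht k
    have hunit := (isUnit_conj_diagonal_iff hU).mp (hshift t ▸ hinv t ht)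
    exact (add_nonneg (hl k) (sq_nonneg t)).lt_of_ne' (Pi.isUnit_iff.mp hunit k).ne_zero
  have hTpos := hpos T ⟨hT, le_rfl⟩
  refine ⟨?_, fun t ht => ?_⟩
  · have hone : (fun k => √((l k + T ^ 2) / (l k + T ^ 2))) = 1 :=
      funext fun k => by rw [div_self (hTpos k).ne', Real.sqrt_one, Pi.one_apply]
    simp only [hone, diagonal_one', Matrix.mul_one, hU, one_mulVec, add_sub_cancel]
  · have hd : HasDerivAt (fun s k => √((l k + s ^ 2) / (l k + T ^ 2)))
        (fun k => t / (l k + t ^ 2) * √((l k + t ^ 2) / (l k + T ^ 2))) t :=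
      hasDerivAt_pi.2 fun k => hasDerivAt_sqrt_add_sq_div (hpos t ht k) (hTpos k)
    refine ((hasDerivAt_mul_diagonal_mul_mulVec U Uᵀ (xT - μ) hd).const_add μ).congr_deriv ?_
    rw [hshift, inv_conj_diagonal hU fun k => (hpos t ht k).ne', sub_add_cancel_left, mulVec_neg,
      mulVec_mulVec, conj_diagonal_mul_conj_diagonal (mul_eq_one_comm.mp hU), smul_neg, neg_neg,
      ← smul_mulVec, smul_conj_diagonal]
    congr
    funext k
    simp only [Pi.smul_apply, Pi.mul_apply, Pi.inv_apply, smul_eq_mul]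
    ring

/-- Closed-form solution of the probability flow ODE
`dx/dt = −t (S + t²I)⁻¹ (μ − x)` for a Gaussian data distribution `N(μ, S)`
with eigendecomposition `S = U diag(λ) Uᵀ` (`U` orthogonal) and terminal
condition `x(T) = x_T`: the map
`y(t) = μ + U diag(√((λₖ + t²)/(λₖ + T²))) Uᵀ (x_T − μ)`
satisfies `y(T) = x_T` and solves the ODE on `[0, T]`. -/
theorem gaussian_pfode_solution {n : ℕ} (T : ℝ) (hT : 0 ≤ T)
    (μ xT : Fin n → ℝ) (S U : Matrix (Fin n) (Fin n) ℝ) (l : Fin n → ℝ)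
    (hS : S.PosSemidef) (hU : U * Uᵀ = 1) (hl : ∀ k, 0 ≤ l k)
    (hdecomp : S = U * Matrix.diagonal l * Uᵀ)
    (hinv : ∀ t ∈ Icc (0 : ℝ) T, IsUnit (S + t ^ 2 • (1 : Matrix (Fin n) (Fin n) ℝ))) :
    (fun t : ℝ => μ + (U * Matrix.diagonal
        (fun k => Real.sqrt ((l k + t ^ 2) / (l k + T ^ 2))) * Uᵀ).mulVec (xT - μ)) T = xT ∧
    ∀ t ∈ Icc (0 : ℝ) T,
      HasDerivAt
        (fun t : ℝ => μ + (U * Matrix.diagonal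
          (fun k => Real.sqrt ((l k + t ^ 2) / (l k + T ^ 2))) * Uᵀ).mulVec (xT - μ))
        (-(t • ((S + t ^ 2 • (1 : Matrix (Fin n) (Fin n) ℝ))⁻¹.mulVec
          (μ - (μ + (U * Matrix.diagonal
            (fun k => Real.sqrt ((l k + t ^ 2) / (l k + T ^ 2))) * Uᵀ).mulVec (xT - μ))))))
        t :=
  gaussian_pfode_solution_general T hT μ xT S U l hU hl hdecomp hinv
end

section
/- For a Gaussian data distribution N(μ, Σ) on ℝⁿ with eigendecomposition Σ = U diag(λ_1, ..., λ_n) Uᵀ, consider the probability flow ODE solution at time t = 0 from terminal condition x_T = Tε; then for each fixed ε ∈ ℝⁿ, lim_{T→∞} [μ + U diag(√(λₖ/(λₖ+T²))) Uᵀ (Tε − μ)] = μ + Σ^{1/2} ε. -/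
open Matrix Filter

lemma scalar_lim_zero {c : ℝ} (hc : 0 ≤ c) :
    Tendsto (fun T : ℝ => Real.sqrt (c / (c + T ^ 2))) atTop (nhds 0) := by
  have h1 : Tendsto (fun T : ℝ => c / (c + T ^ 2)) atTop (nhds 0) := by
    apply Tendsto.div_atTop tendsto_const_nhds
    exact tendsto_atTop_add_const_left _ c (tendsto_pow_atTop (by norm_num))
  have := (Real.continuous_sqrt.tendsto 0).comp h1
  simpa [Function.comp_def] using this

lemma scalar_lim_sqrt {c : ℝ} (hc : 0 ≤ c) :
    Tendsto (fun T : ℝ => T * Real.sqrt (c / (c + T ^ 2))) atTop (nhds (Real.sqrt c)) := by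
  have h1 : Tendsto (fun T : ℝ => c * T ^ 2 / (c + T ^ 2)) atTop (nhds c) := by
    have h2 : Tendsto (fun T : ℝ => c / (c / T ^ 2 + 1)) atTop (nhds c) := by
      have hd : Tendsto (fun T : ℝ => c / T ^ 2 + 1) atTop (nhds 1) := by
        have : Tendsto (fun T : ℝ => c / T ^ 2) atTop (nhds 0) := by
          apply Tendsto.div_atTop tendsto_const_nhds
          exact tendsto_pow_atTop (by norm_num)
        simpa using this.add tendsto_const_nhds
      simpa [Pi.div_def] using (tendsto_const_nhds (x := c)).div hd one_ne_zero
    refine h2.congr' ?_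
    filter_upwards [eventually_gt_atTop 0] with T hT
    have hT2 : (T : ℝ) ^ 2 ≠ 0 := by positivity
    field_simp
  have h3 := (Real.continuous_sqrt.tendsto c).comp h1
  refine Tendsto.congr' ?_ h3
  filter_upwards [eventually_gt_atTop 0] with T hT
  have hden : 0 < c + T ^ 2 := by positivity
  simp only [Function.comp]
  rw [Real.sqrt_div hc, Real.sqrt_div (mul_nonneg hc (sq_nonneg T)),
    Real.sqrt_mul hc, Real.sqrt_sq hT.le]
  ring

/-- For a Gaussian data distribution `N(μ, S)` with eigendecomposition
`S = U diag(λ) Uᵀ` (`U` orthogonal, `λ ≥ 0`), the probability flow ODE solution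
at time `0` with terminal condition `x_T = Tε` converges, as `T → ∞` with `ε`
fixed, to `μ + S^{1/2} ε`. -/
theorem gaussian_pfode_limit {n : ℕ}
    (μ ε : Fin n → ℝ) (S U : Matrix (Fin n) (Fin n) ℝ) (l : Fin n → ℝ)
    (hS : S.PosSemidef) (hU : U * Uᵀ = 1) (hl : ∀ k, 0 ≤ l k)
    (hdecomp : S = U * Matrix.diagonal l * Uᵀ) :
    Tendsto
      (fun T : ℝ => μ + (U * Matrix.diagonal
        (fun k => Real.sqrt (l k / (l k + T ^ 2))) * Uᵀ).mulVec (T • ε - μ))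
      atTop (nhds (μ + ((hS.1.eigenvectorUnitary : Matrix (Fin n) (Fin n) ℝ) *
        Matrix.diagonal (Real.sqrt ∘ hS.1.eigenvalues) *
        (star (hS.1.eigenvectorUnitary : Matrix (Fin n) (Fin n) ℝ))).mulVec ε)) := by
  -- identify the square root
  have hUT : Uᴴ = Uᵀ := Matrix.conjTranspose_eq_transpose_of_trivial U
  set B : Matrix (Fin n) (Fin n) ℝ := U * Matrix.diagonal (fun k => Real.sqrt (l k)) * Uᵀ with hB
  have hBpsd : B.PosSemidef := by
    have := (Matrix.PosSemidef.diagonal (R := ℝ) (n := Fin n)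
      (d := fun k => Real.sqrt (l k)) (fun k => Real.sqrt_nonneg _)).mul_mul_conjTranspose_same U
    rwa [hUT] at this
  have hUtU : Uᵀ * U = 1 := by rw [mul_eq_one_comm] at hU; exact hU
  have hBsq : B ^ 2 = S := by
    rw [pow_two, hB, hdecomp]
    rw [show U * Matrix.diagonal (fun k => Real.sqrt (l k)) * Uᵀ *
        (U * Matrix.diagonal (fun k => Real.sqrt (l k)) * Uᵀ)
      = U * (Matrix.diagonal (fun k => Real.sqrt (l k)) * (Uᵀ * U) *
        Matrix.diagonal (fun k => Real.sqrt (l k))) * Uᵀ by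
        simp only [Matrix.mul_assoc]]
    rw [hUtU, mul_one, Matrix.diagonal_mul_diagonal]
    rw [show (fun i => Real.sqrt (l i) * Real.sqrt (l i)) = l from
      funext fun k => Real.mul_self_sqrt (hl k)]
  have hsqrt : ((hS.1.eigenvectorUnitary : Matrix (Fin n) (Fin n) ℝ) *
        Matrix.diagonal (Real.sqrt ∘ hS.1.eigenvalues) *
        (star (hS.1.eigenvectorUnitary : Matrix (Fin n) (Fin n) ℝ))) = B := by
    have h1 : ((hS.1.eigenvectorUnitary : Matrix (Fin n) (Fin n) ℝ) *
          Matrix.diagonal (Real.sqrt ∘ hS.1.eigenvalues) *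
          (star (hS.1.eigenvectorUnitary : Matrix (Fin n) (Fin n) ℝ))) = cfc Real.sqrt S := by
      rw [hS.1.cfc_eq, Matrix.IsHermitian.cfc, Unitary.conjStarAlgAut_apply]
      rfl
    open scoped MatrixOrder in
    rw [h1, ← cfcₙ_eq_cfc, ← CFC.sqrt_eq_real_sqrt S hS.nonneg]
    open scoped MatrixOrder in
    exact CFC.sqrt_unique (by rw [← hBsq, pow_two]) hBpsd.nonneg
  -- matrix limits
  set A : ℝ → Matrix (Fin n) (Fin n) ℝ := fun T =>
    U * Matrix.diagonal (fun k => Real.sqrt (l k / (l k + T ^ 2))) * Uᵀ with hA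
  have hA0 : Tendsto A atTop (nhds 0) := by
    have hvec : Tendsto (fun T : ℝ => fun k => Real.sqrt (l k / (l k + T ^ 2)))
        atTop (nhds (fun _ => (0:ℝ))) :=
      tendsto_pi_nhds.2 fun k => scalar_lim_zero (hl k)
    have hdiag : Tendsto (fun T : ℝ =>
        Matrix.diagonal (fun k => Real.sqrt (l k / (l k + T ^ 2))))
        atTop (nhds (Matrix.diagonal (fun _ => (0:ℝ)))) :=
      ((Continuous.matrix_diagonal continuous_id).tendsto _).comp hvec
    have := ((tendsto_const_nhds (x := U)).mul hdiag).mul (tendsto_const_nhds (x := Uᵀ))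
    simpa using this
  have hAB : Tendsto (fun T : ℝ => T • A T) atTop (nhds B) := by
    have heq : ∀ T : ℝ, T • A T =
        U * Matrix.diagonal (fun k => T * Real.sqrt (l k / (l k + T ^ 2))) * Uᵀ := by
      intro T
      rw [hA]
      rw [show (fun k => T * Real.sqrt (l k / (l k + T ^ 2)))
        = T • (fun k => Real.sqrt (l k / (l k + T ^ 2))) from rfl]
      rw [Matrix.diagonal_smul]
      simp [Matrix.mul_smul, Matrix.smul_mul]
    simp only [heq]
    have hvec : Tendsto (fun T : ℝ => fun k => T * Real.sqrt (l k / (l k + T ^ 2)))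
        atTop (nhds (fun k => Real.sqrt (l k))) :=
      tendsto_pi_nhds.2 fun k => scalar_lim_sqrt (hl k)
    have hdiag : Tendsto (fun T : ℝ =>
        Matrix.diagonal (fun k => T * Real.sqrt (l k / (l k + T ^ 2))))
        atTop (nhds (Matrix.diagonal (fun k => Real.sqrt (l k)))) :=
      ((Continuous.matrix_diagonal continuous_id).tendsto _).comp hvec
    have := ((tendsto_const_nhds (x := U)).mul hdiag).mul (tendsto_const_nhds (x := Uᵀ))
    simpa using this
  -- put it together
  have key : ∀ T : ℝ, μ + (A T).mulVec (T • ε - μ)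
      = μ + ((T • A T).mulVec ε - (A T).mulVec μ) := by
    intro T
    rw [Matrix.mulVec_sub, Matrix.mulVec_smul, Matrix.smul_mulVec]
  change Tendsto (fun T : ℝ => μ + (A T).mulVec (T • ε - μ)) _ _
  simp only [key]
  rw [hsqrt]
  have hlim : Tendsto (fun T : ℝ => (T • A T).mulVec ε - (A T).mulVec μ)
      atTop (nhds (B.mulVec ε)) := by
    have h1 : Tendsto (fun T : ℝ => (T • A T).mulVec ε) atTop (nhds (B.mulVec ε)) :=
      (Continuous.matrix_mulVec continuous_id continuous_const).continuousAt.tendsto.comp hAB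
    have h2 : Tendsto (fun T : ℝ => (A T).mulVec μ) atTop
        (nhds ((0 : Matrix (Fin n) (Fin n) ℝ).mulVec μ)) :=
      (Continuous.matrix_mulVec continuous_id continuous_const).continuousAt.tendsto.comp hA0
    simpa using h1.sub h2
  exact tendsto_const_nhds.add hlim
end
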